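/- Let f(z) = ∑_{n=0}^∞ a_n z^n be a power series with complex coefficients convergent on the open disk D(0,R) ⊂ ℂ with R > 0, and let f_a(z) := ∑_{n=0}^∞ |a_n| z^n. Let A, B be commuting bounded linear operators on a complex Hilbert space H with ‖A‖² < R and ‖B‖² < R. Then r(f(AB)) ≤ (1/2)[f_a(‖AB‖) + f_a(‖A²‖^{1/2} ‖B²‖^{1/2})]. -/

import Mathlib

/-!
If `r(x) < t`, Gelfand's formula gives `‖xⁿ‖ ≤ C tⁿ` for all `n`; expanding `f(x)ᵏ` term by term
then yields `‖f(x)ᵏ‖ ≤ C f_a(t)ᵏ`, so `r(f(x)) ≤ f_a(t)`, and letting `t ↓ r(x)` (the majorant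
`f_a` is continuous inside the disk) gives `r(f(x)) ≤ f_a(r(x))`. For `x = AB` with `A`, `B`
commuting, `r(AB) ≤ ‖AB‖` and `r(AB)² ≤ ‖(AB)²‖ = ‖A²B²‖ ≤ ‖A²‖‖B²‖`; since `f_a` is increasing,
`f_a(r(AB))` is bounded by both terms of the mean.
-/

open Filter Topology Set
open scoped ENNReal

section Majorant

variable {a : ℕ → ℂ} {R : ℝ}

theorem summable_norm_mul_pow_of_lt
    (hconv : ∀ z : ℂ, ‖z‖ < R → Summable fun n : ℕ => a n * z ^ n)
    {t : ℝ} (ht : 0 ≤ t) (htR : t < R) :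
    Summable fun n : ℕ => ‖a n‖ * t ^ n := by
  obtain ⟨u, htu, huR⟩ := exists_between htR
  have hu : 0 ≤ u := ht.trans htu.le
  let p := FormalMultilinearSeries.ofScalars ℂ a
  have hdecay : Tendsto (fun n => ‖p n‖ * (u.toNNReal : ℝ) ^ n) atTop (𝓝 0) := by
    have := (hconv u (by simpa [abs_of_nonneg hu] using huR)).tendsto_atTop_zero.norm
    simpa [p, abs_of_nonneg hu, hu] using this
  have hlt : (t.toNNReal : ℝ≥0∞) < p.radius :=
    (ENNReal.coe_lt_coe.2 (Real.toNNReal_lt_toNNReal_iff_of_nonneg ht |>.2 htu)).trans_le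
      (p.le_radius_of_tendsto hdecay)
  simpa [p, ht] using p.summable_norm_mul_pow hlt

theorem tsum_norm_mul_pow_le_of_le
    (hconv : ∀ z : ℂ, ‖z‖ < R → Summable fun n : ℕ => a n * z ^ n)
    {s t : ℝ} (hs : 0 ≤ s) (hst : s ≤ t) (htR : t < R) :
    ∑' n : ℕ, ‖a n‖ * s ^ n ≤ ∑' n : ℕ, ‖a n‖ * t ^ n := by
  refine Summable.tsum_le_tsum (fun n => by gcongr)
    (summable_norm_mul_pow_of_lt hconv hs (hst.trans_lt htR))
    (summable_norm_mul_pow_of_lt hconv (hs.trans hst) htR)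

theorem continuousOn_tsum_norm_mul_pow
    (hconv : ∀ z : ℂ, ‖z‖ < R → Summable fun n : ℕ => a n * z ^ n) :
    ContinuousOn (fun t : ℝ => ∑' n : ℕ, ‖a n‖ * t ^ n) (Ico 0 R) := by
  refine continuousOn_of_locally_continuousOn fun s hs => ?_
  obtain ⟨u, hsu, huR⟩ := exists_between hs.2
  refine ⟨Iio u, isOpen_Iio, hsu, ?_⟩
  refine continuousOn_tsum (fun n => by fun_prop)
    (summable_norm_mul_pow_of_lt hconv (hs.1.trans hsu.le) huR) fun n t ht => ?_
  have ht0 : 0 ≤ t := ht.1.1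
  rw [Real.norm_of_nonneg (by positivity)]
  gcongr
  exact ht.2.le

end Majorant

section BanachAlgebra

variable {𝒜 : Type*} [NormedRing 𝒜] [NormedAlgebra ℂ 𝒜] [CompleteSpace 𝒜]

-- The factor `x ^ j` makes the induction on `k` go through.
theorem norm_pow_mul_tsum_smul_pow_pow_le {a : ℕ → ℂ} {x : 𝒜} {C t : ℝ}
    (hx : ∀ n, ‖x ^ n‖ ≤ C * t ^ n) (hs : Summable fun n => ‖a n‖ * t ^ n) (k j : ℕ) :
    ‖x ^ j * (∑' n, a n • x ^ n) ^ k‖ ≤ C * t ^ j * (∑' n, ‖a n‖ * t ^ n) ^ k := by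
  induction k generalizing j with
  | zero => simpa using hx j
  | succ k ih =>
    set F := ∑' n, ‖a n‖ * t ^ n
    have hterm (n : ℕ) : ‖a n • x ^ (j + n) * (∑' n, a n • x ^ n) ^ k‖ ≤
        C * t ^ j * F ^ k * (‖a n‖ * t ^ n) := by
      rw [smul_mul_assoc, norm_smul]
      calc ‖a n‖ * ‖x ^ (j + n) * (∑' n, a n • x ^ n) ^ k‖
          ≤ ‖a n‖ * (C * t ^ (j + n) * F ^ k) := by gcongr; exact ih (j + n)
        _ = C * t ^ j * F ^ k * (‖a n‖ * t ^ n) := by rw [pow_add]; ring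
    have hsum : Summable fun n => a n • x ^ n :=
      .of_norm_bounded (hs.mul_left C) fun n => by
        rw [norm_smul, mul_left_comm]; gcongr; exact hx n
    have hsum' : Summable fun n => ‖a n • x ^ (j + n) * (∑' n, a n • x ^ n) ^ k‖ :=
      .of_nonneg_of_le (fun _ => norm_nonneg _) hterm (hs.mul_left _)
    have hexpand : x ^ j * (∑' n, a n • x ^ n) ^ (k + 1) =
        ∑' n, a n • x ^ (j + n) * (∑' n, a n • x ^ n) ^ k := by
      have hsumj : Summable fun n => a n • x ^ (j + n) := by
        simpa only [pow_add, mul_smul_comm] using hsum.mul_left (x ^ j)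
      rw [hsumj.tsum_mul_right, pow_succ', ← mul_assoc, ← hsum.tsum_mul_left]
      simp_rw [mul_smul_comm, pow_add]
    calc ‖x ^ j * (∑' n, a n • x ^ n) ^ (k + 1)‖
        ≤ ∑' n, ‖a n • x ^ (j + n) * (∑' n, a n • x ^ n) ^ k‖ :=
          hexpand ▸ norm_tsum_le_tsum_norm hsum'
      _ ≤ ∑' n, C * t ^ j * F ^ k * (‖a n‖ * t ^ n) :=
          hsum'.tsum_le_tsum hterm (hs.mul_left _)
      _ = C * t ^ j * F ^ (k + 1) := by rw [hs.tsum_mul_left, pow_succ]; ring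

theorem spectralRadius_le_of_norm_pow_le {x : 𝒜} {C F : ℝ} (hC : 0 < C) (hF : 0 ≤ F)
    (h : ∀ k, ‖x ^ k‖ ≤ C * F ^ k) : spectralRadius ℂ x ≤ ENNReal.ofReal F := by
  have hroot : Tendsto (fun k : ℕ => C ^ (1 / (k : ℝ)) * F) atTop (𝓝 F) := by
    simpa [Real.rpow_zero] using
      ((Real.continuousAt_const_rpow hC.ne').tendsto.comp
        (tendsto_const_div_atTop_nhds_zero_nat 1)).mul_const F
  refine le_of_tendsto_of_tendsto (spectrum.pow_norm_pow_one_div_tendsto_nhds_spectralRadius x)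
    (ENNReal.tendsto_ofReal hroot) ?_
  filter_upwards [eventually_ne_atTop 0] with k hk
  refine ENNReal.ofReal_le_ofReal ?_
  calc ‖x ^ k‖ ^ (1 / (k : ℝ)) ≤ (C * F ^ k) ^ (1 / (k : ℝ)) := by gcongr; exact h k
    _ = C ^ (1 / (k : ℝ)) * F := by
      rw [Real.mul_rpow hC.le (by positivity), one_div, Real.pow_rpow_inv_natCast hF hk]

theorem exists_norm_pow_le_mul_pow_of_spectralRadius_lt {x : 𝒜} {t : ℝ}
    (ht : spectralRadius ℂ x < ENNReal.ofReal t) : ∃ C > 0, ∀ n, ‖x ^ n‖ ≤ C * t ^ n := by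
  have ht0 : 0 < t := ENNReal.ofReal_pos.1 (pos_of_gt ht)
  have hevent : ∀ᶠ n : ℕ in atTop, ‖x ^ n‖ ≤ t ^ n := by
    filter_upwards [(spectrum.pow_norm_pow_one_div_tendsto_nhds_spectralRadius x).eventually
      (gt_mem_nhds ht), eventually_ne_atTop 0] with n hn hn0
    have hroot : ‖x ^ n‖ ^ (1 / (n : ℝ)) < t :=
      (ENNReal.ofReal_lt_ofReal_iff ht0).1 hn
    rw [one_div, Real.rpow_inv_lt_iff_of_pos (norm_nonneg _) ht0.le (by positivity)] at hroot
    exact_mod_cast hroot.le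
  have hbigO : (fun n => x ^ n) =O[atTop] fun n => t ^ n :=
    .of_bound 1 (hevent.mono fun n hn => by simpa [abs_of_pos ht0] using hn)
  obtain ⟨C, hC, hCx⟩ := Asymptotics.bound_of_isBigO_nat_atTop hbigO
  refine ⟨C, hC, fun n => ?_⟩
  simpa [abs_of_pos ht0] using hCx (pow_ne_zero n ht0.ne')

theorem spectralRadius_tsum_smul_pow_le_of_lt {a : ℕ → ℂ} {x : 𝒜} {t : ℝ}
    (hs : Summable fun n => ‖a n‖ * t ^ n) (ht : spectralRadius ℂ x < ENNReal.ofReal t) :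
    spectralRadius ℂ (∑' n, a n • x ^ n) ≤ ENNReal.ofReal (∑' n, ‖a n‖ * t ^ n) := by
  obtain ⟨C, hC, hx⟩ := exists_norm_pow_le_mul_pow_of_spectralRadius_lt ht
  have ht0 : 0 ≤ t := (ENNReal.ofReal_pos.1 (pos_of_gt ht)).le
  refine spectralRadius_le_of_norm_pow_le hC (tsum_nonneg fun n => by positivity) fun k => ?_
  simpa using norm_pow_mul_tsum_smul_pow_pow_le hx hs k 0

theorem spectralRadius_tsum_smul_pow_le {a : ℕ → ℂ} {R : ℝ}
    (hconv : ∀ z : ℂ, ‖z‖ < R → Summable fun n : ℕ => a n * z ^ n) {x : 𝒜}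
    (hx : spectralRadius ℂ x < ENNReal.ofReal R) :
    (spectralRadius ℂ (∑' n, a n • x ^ n)).toReal ≤
      ∑' n, ‖a n‖ * (spectralRadius ℂ x).toReal ^ n := by
  set ρ := (spectralRadius ℂ x).toReal
  have hρx : spectralRadius ℂ x = ENNReal.ofReal ρ := (ENNReal.ofReal_toReal hx.ne_top).symm
  have hρR : ρ < R := by
    rw [hρx] at hx
    exact (ENNReal.ofReal_lt_ofReal_iff'.1 hx).1
  have hρ : 0 ≤ ρ := ENNReal.toReal_nonneg
  have hcont : Tendsto (fun t : ℝ => ∑' n, ‖a n‖ * t ^ n) (𝓝[>] ρ) (𝓝 (∑' n, ‖a n‖ * ρ ^ n)) :=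
    ((continuousOn_tsum_norm_mul_pow hconv).continuousWithinAt ⟨hρ, hρR⟩).mono_left
      (by rw [← nhdsWithin_Ioo_eq_nhdsGT hρR]
          exact nhdsWithin_mono _ (Ioo_subset_Ico_self.trans (Ico_subset_Ico_left hρ)))
  refine ge_of_tendsto hcont ?_
  filter_upwards [Ioo_mem_nhdsGT hρR] with t ht
  have hsum := summable_norm_mul_pow_of_lt hconv (hρ.trans ht.1.le) ht.2
  refine ENNReal.toReal_le_of_le_ofReal
    (tsum_nonneg fun n => mul_nonneg (norm_nonneg _) (pow_nonneg (hρ.trans ht.1.le) _))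
    (spectralRadius_tsum_smul_pow_le_of_lt hsum ?_)
  rw [hρx, ENNReal.ofReal_lt_ofReal_iff_of_nonneg hρ]
  exact ht.1

theorem toReal_spectralRadius_mul_le_of_commute [NormOneClass 𝒜] {x y : 𝒜} (hxy : Commute x y) :
    (spectralRadius ℂ (x * y)).toReal ≤ √‖x ^ 2‖ * √‖y ^ 2‖ := by
  have hsq : spectralRadius ℂ (x * y) ^ 2 ≤ ‖x ^ 2‖₊ * ‖y ^ 2‖₊ :=
    calc spectralRadius ℂ (x * y) ^ 2 ≤ spectralRadius ℂ ((x * y) ^ 2) :=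
          spectrum.spectralRadius_pow_le _ 2 two_ne_zero
      _ ≤ ‖(x * y) ^ 2‖₊ := spectrum.spectralRadius_le_nnnorm _
      _ ≤ ‖x ^ 2‖₊ * ‖y ^ 2‖₊ := by
          rw [hxy.mul_pow]; exact_mod_cast nnnorm_mul_le _ _
  rw [← Real.sqrt_mul (norm_nonneg _)]
  refine Real.le_sqrt_of_sq_le ?_
  simpa using ENNReal.toReal_mono (by finiteness) hsq

end BanachAlgebra

theorem spectralRadius_powerSeries_mul_le_kittaneh_general
    {H : Type*} [NormedAddCommGroup H] [InnerProductSpace ℂ H] [CompleteSpace H]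
    (a : ℕ → ℂ) (R : ℝ)
    (hconv : ∀ z : ℂ, ‖z‖ < R → Summable fun n : ℕ => a n * z ^ n)
    (A B : H →L[ℂ] H) (hcomm : A * B = B * A)
    (hA : ‖A‖ ^ 2 < R) (hB : ‖B‖ ^ 2 < R) :
    (spectralRadius ℂ (∑' n : ℕ, a n • (A * B) ^ n)).toReal ≤
      (1 / 2) * ((∑' n : ℕ, ‖a n‖ * ‖A * B‖ ^ n) +
        ∑' n : ℕ, ‖a n‖ * (Real.sqrt ‖A ^ 2‖ * Real.sqrt ‖B ^ 2‖) ^ n) := by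
  rcases subsingleton_or_nontrivial H with _ | _
  · rw [spectrum.SpectralRadius.of_subsingleton, ENNReal.toReal_zero]
    positivity
  set T := A * B
  have hAB : ‖A‖ * ‖B‖ < R := by nlinarith [sq_nonneg (‖A‖ - ‖B‖)]
  have hTR : ‖T‖ < R := (norm_mul_le A B).trans_lt hAB
  have hsR : √‖A ^ 2‖ * √‖B ^ 2‖ < R := by
    refine lt_of_le_of_lt ?_ hAB
    gcongr <;> exact Real.sqrt_le_iff.2 ⟨norm_nonneg _, norm_pow_le _ 2⟩
  have hρT : (spectralRadius ℂ T).toReal ≤ ‖T‖ :=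
    ENNReal.toReal_le_coe_of_le_coe (spectrum.spectralRadius_le_nnnorm T)
  have hρs : (spectralRadius ℂ T).toReal ≤ √‖A ^ 2‖ * √‖B ^ 2‖ :=
    toReal_spectralRadius_mul_le_of_commute hcomm
  have hρR : spectralRadius ℂ T < ENNReal.ofReal R :=
    (spectrum.spectralRadius_le_nnnorm T).trans_lt <| by simpa using hTR
  have hρ : 0 ≤ (spectralRadius ℂ T).toReal := ENNReal.toReal_nonneg
  linarith [spectralRadius_tsum_smul_pow_le hconv hρR,
    tsum_norm_mul_pow_le_of_le hconv hρ hρT hTR, tsum_norm_mul_pow_le_of_le hconv hρ hρs hsR]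

/-- For commuting `A`, `B` with `‖A‖² < R`, `‖B‖² < R`, one has
`r(f(AB)) ≤ (1/2)[f_a(‖AB‖) + f_a(‖A²‖^{1/2} ‖B²‖^{1/2})]`. -/
theorem spectralRadius_powerSeries_mul_le_kittaneh
    {H : Type*} [NormedAddCommGroup H] [InnerProductSpace ℂ H] [CompleteSpace H]
    (a : ℕ → ℂ) (R : ℝ) (hR : 0 < R)
    (hconv : ∀ z : ℂ, ‖z‖ < R → Summable fun n : ℕ => a n * z ^ n)
    (A B : H →L[ℂ] H) (hcomm : A * B = B * A)
    (hA : ‖A‖ ^ 2 < R) (hB : ‖B‖ ^ 2 < R) :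
    (spectralRadius ℂ (∑' n : ℕ, a n • (A * B) ^ n)).toReal ≤
      (1 / 2) * ((∑' n : ℕ, ‖a n‖ * ‖A * B‖ ^ n) +
        ∑' n : ℕ, ‖a n‖ * (Real.sqrt ‖A ^ 2‖ * Real.sqrt ‖B ^ 2‖) ^ n) :=
  spectralRadius_powerSeries_mul_le_kittaneh_general a R hconv A B hcomm hA hB
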